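/- On the Lie algebra g_{6,54}^{0,-1} with structure equations (e^{16}+e^{35}, -e^{26}+e^{45}, e^{36}, -e^{46}, 0, 0), the pair F = e^{14} + e^{23} + e^{56} and ρ = e^{125} - e^{136} + e^{246} + e^{345} satisfies: dF = 0, dρ = 0, F∧F∧F ≠ 0, and F∧ρ = 0. -/

import Mathlib

/-!
All four claims are finite computations in `Λ(ℝ⁶)`: expanding and sorting monomials by the
anticommutation `e i * e j = -(e j * e i)` makes `dF`, `dρ` and `F ∧ ρ` cancel termwise.
`F` is a sum of three commuting 2-forms of square zero, so `F³ = 6 e¹²³⁴⁵⁶`, a nonzero multiple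
of a member of the standard basis of the exterior algebra.
-/

open ExteriorAlgebra

noncomputable section

/-- The exterior algebra Λ*(g*) of a 6-dimensional real Lie algebra g,
    identified with the exterior algebra on ℝ^6. -/
abbrev E6 : Type := ExteriorAlgebra ℝ (Fin 6 → ℝ)

/-- The basis 1-forms e^1, ..., e^6 (0-indexed). -/
def e (i : Fin 6) : E6 := ι ℝ (Pi.single i 1)

/-- Structure equations: d of the basis 1-forms. -/
def d1 : Fin 6 → E6 :=
  ![e 0 * e 5 + e 2 * e 4,
    -(e 1 * e 5) + e 3 * e 4,
    e 2 * e 5,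
    -(e 3 * e 5),
    0,
    0]

/-- Leibniz: d(e^i ∧ e^j) = de^i ∧ e^j - e^i ∧ de^j. -/
def d2 (i j : Fin 6) : E6 := d1 i * e j - e i * d1 j

/-- Leibniz: d(e^i ∧ e^j ∧ e^k) = de^i ∧ e^j ∧ e^k - e^i ∧ de^j ∧ e^k + e^i ∧ e^j ∧ de^k. -/
def d3 (i j k : Fin 6) : E6 := d1 i * e j * e k - e i * d1 j * e k + e i * e j * d1 k

/-- F. -/
def F : E6 := e 0 * e 3 + e 1 * e 2 + e 4 * e 5

/-- dF via the Leibniz rule. -/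
def dF : E6 := d2 0 3 + d2 1 2 + d2 4 5

/-- ρ. -/
def ρ : E6 := e 0 * e 1 * e 4 - e 0 * e 2 * e 5 + e 1 * e 3 * e 5 + e 2 * e 3 * e 4

/-- dρ via the Leibniz rule. -/
def dρ : E6 := d3 0 1 4 - d3 0 2 5 + d3 1 3 5 + d3 2 3 4

theorem Module.Basis.ιMulti_ne_zero {R M : Type*} [CommRing R] [Nontrivial R] [AddCommGroup M]
    [Module R M] {n : ℕ} (b : Module.Basis (Fin n) R M) : ιMulti R n b ≠ 0 := by
  have h := b.ExteriorAlgebra.ne_zero Finset.univ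
  rw [ExteriorAlgebra.basis_apply_ofCard b (Finset.card_fin n), ExteriorAlgebra.ιMulti_family,
    Set.powersetCard.ofFinEmbEquiv_symm_apply] at h
  convert h
  exact congrArg (b ∘ ·) (Finset.orderEmbOfFin_unique _ (fun _ => Finset.mem_univ _) strictMono_id)

@[simp]
lemma e_mul_self (i : Fin 6) : e i * e i = 0 := ι_sq_zero _

-- The index condition orients the rewrite, so that `simp` sorts monomials increasingly.
@[simp]
lemma e_mul_e_of_lt {i j : Fin 6} (_ : j < i) : e i * e j = -(e j * e i) :=
  eq_neg_of_add_eq_zero_left (ι_add_mul_swap _ _)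

@[simp]
lemma e_mul_e_mul_self (i : Fin 6) (x : E6) : e i * (e i * x) = 0 := by
  rw [← mul_assoc, e_mul_self, zero_mul]

@[simp]
lemma e_mul_e_mul_of_lt {i j : Fin 6} (h : j < i) (x : E6) :
    e i * (e j * x) = -(e j * (e i * x)) := by
  rw [← mul_assoc, e_mul_e_of_lt h, neg_mul, mul_assoc]

lemma ιMulti_basisFun_six :
    ιMulti ℝ 6 (Pi.basisFun ℝ (Fin 6)) = e 0 * (e 1 * (e 2 * (e 3 * (e 4 * e 5)))) := by
  simp only [e, ιMulti_apply, List.ofFn_succ, Pi.basisFun_apply]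
  simp

lemma dF_eq_zero : dF = 0 := by
  simp [dF, d2, d1, add_mul, mul_assoc]

lemma dρ_eq_zero : dρ = 0 := by
  simp [dρ, d3, d1, mul_add, add_mul, mul_assoc]

lemma F_mul_ρ : F * ρ = 0 := by
  simp [F, ρ, mul_add, add_mul, mul_sub, mul_assoc]

lemma F_cube : F * F * F = (6 : ℝ) • ιMulti ℝ 6 (Pi.basisFun ℝ (Fin 6)) := by
  rw [ιMulti_basisFun_six]
  simp [F, mul_add, add_mul, mul_assoc]
  module

/-- Symplectic half-flat structure on g_{6,54}^{0,-1}. -/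
theorem stmt5 : dF = 0 ∧ dρ = 0 ∧ F * F * F ≠ 0 ∧ F * ρ = 0 :=
  ⟨dF_eq_zero, dρ_eq_zero, F_cube ▸ smul_ne_zero (by norm_num) (Pi.basisFun ℝ _).ιMulti_ne_zero,
    F_mul_ρ⟩
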